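/- For λ = 1/√2, the distribution function of the Bernoulli convolution is F_λ(x) = ((3/4)√2 + 1)x² for x ∈ [0, 1/(1+√2)], F_λ(x) = (1 + 1/√2)x − √2/4 for x ∈ [1/(1+√2), √2/(1+√2)], and F_λ(x) = 1 − (1 + (3/4)√2)(1−x)² for x ∈ [√2/(1+√2), 1]; i.e., this explicitly defined function satisfies the self-similarity equation F(x) = (1/2)(F(√2 x) + F(√2 x − (√2 − 1))) (with F ≡ 0 on (−∞,0] and F ≡ 1 on [1,∞)) and is a continuous increasing bijection of [0,1]. -/

import Mathlib

/-!
The breakpoints of `F12` are `√2 - 1` and `2 - √2 = 1 - (√2 - 1)`, and the graph of `F12` is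
point-symmetric about `(1/2, 1/2)`: `F12 (1 - x) = 1 - F12 x`. The substitution `x ↦ 1 - x`
swaps the two terms of the self-similarity equation, so the equation and strict monotonicity
only need to be checked on `(-∞, 1/2]`. There the equation splits into four cases, each a
polynomial identity modulo `√2 ^ 2 = 2`.
-/

open Set

/-- The explicit distribution function of the Bernoulli convolution for `λ = 1/√2`. -/
noncomputable def F12 (x : ℝ) : ℝ :=
  if x ≤ 0 then 0
  else if x ≤ 1 / (1 + Real.sqrt 2) then (3/4 * Real.sqrt 2 + 1) * x ^ 2
  else if x ≤ Real.sqrt 2 / (1 + Real.sqrt 2) then (1 + 1 / Real.sqrt 2) * x - Real.sqrt 2 / 4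
  else if x ≤ 1 then 1 - (1 + 3/4 * Real.sqrt 2) * (1 - x) ^ 2
  else 1

section General

variable {F : ℝ → ℝ}

theorem selfSimilar_of_one_sub {r : ℝ} (hsymm : ∀ x, F (1 - x) = 1 - F x)
    (h : ∀ x ≤ 1 / 2, F x = 1 / 2 * (F (r * x) + F (r * x - (r - 1)))) (x : ℝ) :
    F x = 1 / 2 * (F (r * x) + F (r * x - (r - 1))) := by
  rcases le_total x (1 / 2) with hx | hx
  · exact h x hx
  have h' := h (1 - x) (by linarith)
  rw [hsymm, show r * (1 - x) - (r - 1) = 1 - r * x by ring,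
    show r * (1 - x) = 1 - (r * x - (r - 1)) by ring, hsymm, hsymm] at h'
  linarith

theorem strictMonoOn_Icc_zero_one_of_one_sub (hsymm : ∀ x, F (1 - x) = 1 - F x)
    (h : StrictMonoOn F (Icc 0 (1 / 2))) : StrictMonoOn F (Icc 0 1) := by
  have hupper : StrictMonoOn F (Icc (1 / 2) 1) := by
    rintro x ⟨hx, hx1⟩ y ⟨hy, hy1⟩ hxy
    have := h ⟨by linarith, by linarith⟩ ⟨by linarith, by linarith⟩ (by linarith : 1 - y < 1 - x)
    rw [hsymm, hsymm] at this
    linarith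
  rw [← Icc_union_Icc_eq_Icc (show (0 : ℝ) ≤ 1 / 2 by norm_num)
    (show (1 / 2 : ℝ) ≤ 1 by norm_num)]
  exact h.union hupper (isGreatest_Icc (by norm_num)) (isLeast_Icc (by norm_num))

theorem bijOn_Icc_of_strictMonoOn {a b : ℝ} (hab : a ≤ b) (hc : ContinuousOn F (Icc a b))
    (hF : StrictMonoOn F (Icc a b)) : BijOn F (Icc a b) (Icc (F a) (F b)) :=
  ⟨hF.monotoneOn.mapsTo_Icc, hF.injOn, hc.surjOn_Icc (left_mem_Icc.2 hab) (right_mem_Icc.2 hab)⟩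

end General

namespace Real

theorem sqrt_two_sq : √2 ^ 2 = 2 := sq_sqrt (by norm_num)

theorem one_div_one_add_sqrt_two : 1 / (1 + √2) = √2 - 1 := by
  field_simp
  linear_combination -sqrt_two_sq

theorem sqrt_two_div_one_add_sqrt_two : √2 / (1 + √2) = 2 - √2 := by
  field_simp
  linear_combination sqrt_two_sq

theorem one_div_sqrt_two : 1 / √2 = √2 / 2 := by
  field_simp
  linear_combination -sqrt_two_sq

end Real

open Real

theorem F12_of_nonpos {x : ℝ} (h : x ≤ 0) : F12 x = 0 := if_pos h

theorem F12_eq_sq {x : ℝ} (h0 : 0 ≤ x) (h : x ≤ √2 - 1) :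
    F12 x = (3/4 * √2 + 1) * x ^ 2 := by
  unfold F12
  rw [one_div_one_add_sqrt_two]
  split_ifs with h1
  · rw [le_antisymm h1 h0]; ring
  · rfl

theorem F12_eq_linear {x : ℝ} (h0 : √2 - 1 ≤ x) (h : x ≤ 2 - √2) :
    F12 x = 1 / 2 + (1 + √2 / 2) * (x - 1 / 2) := by
  have := one_lt_sqrt_two
  unfold F12
  rw [one_div_one_add_sqrt_two, sqrt_two_div_one_add_sqrt_two, one_div_sqrt_two]
  split_ifs with h1 h2
  · linarith
  · rw [le_antisymm h2 h0]
    linear_combination (3/4 * √2 - 1) * sqrt_two_sq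
  · ring

theorem F12_eq_one_sub_sq {x : ℝ} (h0 : 2 - √2 ≤ x) (h : x ≤ 1) :
    F12 x = 1 - (1 + 3/4 * √2) * (1 - x) ^ 2 := by
  have := sqrt_two_lt_three_halves
  unfold F12
  rw [one_div_one_add_sqrt_two, sqrt_two_div_one_add_sqrt_two, one_div_sqrt_two]
  split_ifs with h1 h2 h3
  · linarith
  · linarith
  · rw [le_antisymm h3 h0]
    linear_combination (3/4 * √2 - 1) * sqrt_two_sq
  · rfl

theorem F12_of_one_le {x : ℝ} (h : 1 ≤ x) : F12 x = 1 := by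
  have := one_lt_sqrt_two
  have := sqrt_two_lt_three_halves
  unfold F12
  rw [one_div_one_add_sqrt_two, sqrt_two_div_one_add_sqrt_two]
  split_ifs with h1 h2 h3 h4
  · linarith
  · linarith
  · linarith
  · rw [le_antisymm h4 h]; ring
  · rfl

theorem F12_one_sub (x : ℝ) : F12 (1 - x) = 1 - F12 x := by
  rcases le_or_gt x 0 with h0 | h0
  · rw [F12_of_one_le (by linarith), F12_of_nonpos h0]; ring
  rcases le_or_gt x (√2 - 1) with h1 | h1
  · rw [F12_eq_one_sub_sq (by linarith) (by linarith), F12_eq_sq h0.le h1]; ring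
  rcases le_or_gt x (2 - √2) with h2 | h2
  · rw [F12_eq_linear (by linarith) (by linarith), F12_eq_linear h1.le h2]; ring
  rcases le_or_gt x 1 with h3 | h3
  · rw [F12_eq_sq (by linarith) (by linarith), F12_eq_one_sub_sq h2.le h3]; ring
  · rw [F12_of_nonpos (by linarith), F12_of_one_le h3.le]; ring

theorem F12_selfSimilar_of_le_half {x : ℝ} (hx : x ≤ 1 / 2) :
    F12 x = 1 / 2 * (F12 (√2 * x) + F12 (√2 * x - (√2 - 1))) := by
  have := one_lt_sqrt_two
  have := sqrt_two_sq
  rcases le_or_gt x 0 with h0 | h0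
  · rw [F12_of_nonpos h0, F12_of_nonpos (by nlinarith), F12_of_nonpos (by nlinarith)]; ring
  rcases le_or_gt x (1 - √2 / 2) with h1 | h1
  · rw [F12_eq_sq h0.le (by nlinarith), F12_eq_sq (by positivity) (by nlinarith),
      F12_of_nonpos (by nlinarith)]
    linear_combination (-(3/8) * √2 - 1/2) * x ^ 2 * sqrt_two_sq
  rcases le_or_gt x (√2 - 1) with h2 | h2
  · rw [F12_eq_sq h0.le h2, F12_eq_linear (by nlinarith) (by nlinarith),
      F12_eq_sq (by nlinarith) (by nlinarith)]
    linear_combination ((-(3/8) + 3/4 * x - 3/8 * x ^ 2) * √2 + 1/4 - 1/2 * x ^ 2) * sqrt_two_sq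
  · rw [F12_eq_linear h2.le (by linarith), F12_eq_one_sub_sq (by nlinarith) (by nlinarith),
      F12_eq_sq (by nlinarith) (by nlinarith)]
    linear_combination ((-(3/8) + 3/4 * x) * √2 + 1/4 - 1/2 * x) * sqrt_two_sq

theorem F12_selfSimilar (x : ℝ) :
    F12 x = 1 / 2 * (F12 (√2 * x) + F12 (√2 * x - (√2 - 1))) :=
  selfSimilar_of_one_sub F12_one_sub (fun _ => F12_selfSimilar_of_le_half) x

theorem continuous_F12 : Continuous F12 := by
  have := one_lt_sqrt_two
  have := sqrt_two_lt_three_halves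
  unfold F12
  simp only [one_div_one_add_sqrt_two, sqrt_two_div_one_add_sqrt_two, one_div_sqrt_two]
  refine continuous_const.if_le (Continuous.if_le (by fun_prop) (Continuous.if_le (by fun_prop)
    (Continuous.if_le (by fun_prop) continuous_const continuous_id continuous_const ?_)
    continuous_id continuous_const ?_) continuous_id continuous_const ?_)
    continuous_id continuous_const ?_
  -- adjacent pieces agree at the breakpoints `0`, `√2 - 1`, `2 - √2`, `1`
  · rintro x rfl; ring
  · rintro x rfl
    rw [if_pos (by linarith)]
    linear_combination (3/4 * √2 - 1) * sqrt_two_sq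
  · rintro x rfl
    rw [if_pos (by linarith)]
    linear_combination (3/4 * √2 - 1) * sqrt_two_sq
  · rintro x rfl
    rw [if_pos (by linarith)]; ring

theorem F12_strictMonoOn : StrictMonoOn F12 (Icc 0 1) := by
  have := one_lt_sqrt_two
  have := sqrt_two_lt_three_halves
  have hsq : StrictMonoOn F12 (Icc 0 (√2 - 1)) := by
    rintro x ⟨hx0, hx1⟩ y ⟨hy0, hy1⟩ hxy
    rw [F12_eq_sq hx0 hx1, F12_eq_sq hy0 hy1]
    gcongr
  have hlin : StrictMonoOn F12 (Icc (√2 - 1) (1 / 2)) := by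
    rintro x ⟨hx0, hx1⟩ y ⟨hy0, hy1⟩ hxy
    rw [F12_eq_linear hx0 (by linarith), F12_eq_linear hy0 (by linarith)]
    gcongr
  refine strictMonoOn_Icc_zero_one_of_one_sub F12_one_sub ?_
  have hmid : √2 - 1 ≤ 1 / 2 := by linarith
  rw [← Icc_union_Icc_eq_Icc (by linarith) hmid]
  exact hsq.union hlin (isGreatest_Icc (by linarith)) (isLeast_Icc hmid)

/-- For `λ = 1/√2`, the explicitly given piecewise function `F12` satisfies the
self-similarity equation `F(x) = (1/2)(F(√2 x) + F(√2 x − (√2 − 1)))`, vanishes on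
`(−∞,0]`, equals `1` on `[1,∞)`, and is a continuous strictly increasing bijection
of `[0,1]`. -/
theorem stmt12 :
    (∀ x : ℝ, x ≤ 0 → F12 x = 0) ∧
    (∀ x : ℝ, 1 ≤ x → F12 x = 1) ∧
    (∀ x : ℝ, F12 x = (1/2) * (F12 (Real.sqrt 2 * x)
        + F12 (Real.sqrt 2 * x - (Real.sqrt 2 - 1)))) ∧
    Continuous F12 ∧
    StrictMonoOn F12 (Set.Icc 0 1) ∧
    Set.BijOn F12 (Set.Icc 0 1) (Set.Icc 0 1) := by
  have hbij := bijOn_Icc_of_strictMonoOn zero_le_one continuous_F12.continuousOn F12_strictMonoOn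
  rw [F12_of_nonpos le_rfl, F12_of_one_le le_rfl] at hbij
  exact ⟨fun _ => F12_of_nonpos, fun _ => F12_of_one_le, F12_selfSimilar, continuous_F12,
    F12_strictMonoOn, hbij⟩
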